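/- Let W(l, d) count nonnegative integer solutions of l = Σ_i d_i x_i where d_i are nonzero integers (possibly negative) with d_i < 0 exactly for i in a set S of size k+1, interpreted via the generating function ∏ 1/(1-t^{d_i}) expanded at t=0. Then W(l, d) = (-1)^{k+1} W(l + Σ_{i∈S} d_i, |d|), where |d| is the vector of absolute values. -/

import Mathlib

/-!
For `d < 0` we have `(1 - t^d)⁻¹ = -t^(-d) (1 - t^(-d))⁻¹`, so the product equals
`(-1)^(k+1) t^(-∑_{i ∈ S} d_i) ∏_i (1 - t^|d_i|)⁻¹`. Each remaining factor is the power series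
`∑_n t^(n |d_i|)`, so the coefficient of `t^N` in their product counts the `x ∈ ℕ^m` with
`∑_i x_i |d_i| = N`.
-/

open PowerSeries HahnSeries Finset

theorem inv_one_sub_eq_neg_inv_mul_inv_one_sub_inv {K : Type*} [Field K] {u : K} (hu : u ≠ 0) :
    (1 - u)⁻¹ = -u⁻¹ * (1 - u⁻¹)⁻¹ := by
  have : 1 - u = -u * (1 - u⁻¹) := by
    rw [mul_sub, mul_one, neg_mul, mul_inv_cancel₀ hu]; ring
  rw [this, mul_inv, inv_neg]

theorem card_eq_card_filter_finsuppAntidiag {ι : Type*} [Fintype ι] [DecidableEq ι] (a : ι → ℕ)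
    (ha : ∀ i, a i ≠ 0) (n : ℕ) :
    Nat.card {x : ι → ℕ // ∑ i, x i * a i = n} =
      #{w ∈ finsuppAntidiag univ n | ∀ i, a i ∣ w i} := by
  rw [← Nat.card_eq_finsetCard]
  refine Nat.card_eq_of_bijective
    (fun x => ⟨Finsupp.equivFunOnFinite.symm (fun i => x.1 i * a i), by simpa using x.2⟩)
    ⟨fun x y hxy => ?_, fun w => ?_⟩
  · ext i
    simpa [ha i] using congrArg (fun w : ι →₀ ℕ => w i) (congrArg Subtype.val hxy)
  · obtain ⟨hw, hdvd⟩ := mem_filter.1 w.2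
    have hsum := (mem_finsuppAntidiag.1 hw).1
    refine ⟨⟨fun i => w.1 i / a i, ?_⟩, ?_⟩
    · simpa [Nat.div_mul_cancel (hdvd _)] using hsum
    · ext i
      simp [Nat.div_mul_cancel (hdvd i)]

namespace PowerSeries

variable {R : Type*} [CommRing R]

theorem expand_mk_one_mul_one_sub_X_pow {a : ℕ} (ha : a ≠ 0) :
    expand a ha (mk 1 : R⟦X⟧) * (1 - X ^ a) = 1 := by
  simpa using congrArg (expand a ha) (mk_one_mul_one_sub_eq_one (S := R))

theorem coeff_expand_mk_one {a : ℕ} (ha : a ≠ 0) (n : ℕ) :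
    coeff n (expand a ha (mk 1 : R⟦X⟧)) = if a ∣ n then 1 else 0 := by
  simp [coeff_expand]

theorem coeff_prod_expand_mk_one {ι : Type*} [Fintype ι] (a : ι → ℕ) (ha : ∀ i, a i ≠ 0)
    (n : ℕ) :
    coeff n (∏ i, expand (a i) (ha i) (mk 1 : R⟦X⟧)) =
      Nat.card {x : ι → ℕ // ∑ i, x i * a i = n} := by
  classical
  simp only [coeff_prod, coeff_expand_mk_one, Fintype.prod_boole, sum_boole]
  rw [card_eq_card_filter_finsuppAntidiag a ha]

end PowerSeries

namespace HahnSeries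

theorem prod_single {ι Γ R : Type*} [AddCommMonoid Γ] [PartialOrder Γ]
    [IsOrderedCancelAddMonoid Γ] [CommSemiring R] (s : Finset ι) (b : ι → Γ) (r : ι → R) :
    ∏ i ∈ s, single (b i) (r i) = single (∑ i ∈ s, b i) (∏ i ∈ s, r i) := by
  classical
  induction s using Finset.induction_on with
  | empty => simp
  | insert i s hi ih => rw [prod_insert hi, ih, single_mul_single, sum_insert hi, prod_insert hi]

variable {Γ K : Type*} [AddCommGroup Γ] [LinearOrder Γ] [IsOrderedAddMonoid Γ] [Field K]

theorem inv_one_sub_single (g : Γ) :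
    (1 - single g (1 : K))⁻¹ = single (-g) (-1) * (1 - single (-g) 1)⁻¹ := by
  rw [inv_one_sub_eq_neg_inv_mul_inv_one_sub_inv (single_ne_zero one_ne_zero), inv_single,
    inv_one, ← single_neg]

theorem inv_one_sub_single_eq_ite_mul (g : Γ) :
    (1 - single g (1 : K))⁻¹ =
      (if g < 0 then single (-g) (-1) else 1) * (1 - single |g| 1)⁻¹ := by
  split_ifs with hg
  · rw [abs_of_neg hg, inv_one_sub_single]
  · rw [abs_of_nonneg (not_lt.1 hg), one_mul]

theorem prod_inv_one_sub_single {ι : Type*} [Fintype ι] (g : ι → Γ) :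
    ∏ i, (1 - single (g i) (1 : K))⁻¹ =
      single (-∑ i with g i < 0, g i) ((-1) ^ #{i | g i < 0}) *
        ∏ i, (1 - single |g i| 1)⁻¹ := by
  rw [prod_congr rfl fun i _ => inv_one_sub_single_eq_ite_mul (g i), prod_mul_distrib,
    ← prod_filter, prod_single, prod_const, sum_neg_distrib]

end HahnSeries

namespace LaurentSeries

variable {K : Type*} [Field K]

theorem inv_one_sub_single_natCast {a : ℕ} (ha : a ≠ 0) :
    (1 - single (a : ℤ) (1 : K))⁻¹ = ofPowerSeries ℤ K (expand a ha (mk 1)) := by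
  refine inv_eq_of_mul_eq_one_left ?_
  rw [← ofPowerSeries_X_pow, ← map_one (ofPowerSeries ℤ K), ← map_sub, ← map_mul,
    expand_mk_one_mul_one_sub_X_pow, map_one]

theorem coeff_prod_inv_one_sub_single {ι : Type*} [Fintype ι] (a : ι → ℤ) (ha : ∀ i, 0 < a i)
    (n : ℤ) :
    (∏ i, (1 - single (a i) (1 : K))⁻¹).coeff n =
      Nat.card {x : ι → ℕ // n = ∑ i, (x i : ℤ) * a i} := by
  lift a to ι → ℕ using fun i => (ha i).le
  have ha₀ : ∀ i, a i ≠ 0 := fun i => by simpa using (ha i).ne'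
  simp only [inv_one_sub_single_natCast (ha₀ _), ← map_prod, coeff_coe]
  split_ifs with hn
  · have : IsEmpty {x : ι → ℕ // n = ∑ i, (x i : ℤ) * a i} :=
      ⟨fun x => hn.not_ge (x.2 ▸ by positivity)⟩
    simp
  · lift n to ℕ using not_lt.1 hn
    rw [Int.natAbs_natCast, coeff_prod_expand_mk_one a ha₀]
    exact congrArg _ (Nat.card_congr (Equiv.subtypeEquivRight fun x => by norm_cast; exact eq_comm))

end LaurentSeries

theorem stmt10 (m k : ℕ) (d : Fin m → ℤ) (hd : ∀ i, d i ≠ 0)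
    (hS : (Finset.univ.filter (fun i => d i < 0)).card = k + 1) (l : ℤ) :
    (∏ i, (1 - (HahnSeries.single (d i) 1 : LaurentSeries ℚ))⁻¹).coeff l =
      (-1) ^ (k + 1) *
        Nat.card {x : Fin m → ℕ //
          l + ∑ i ∈ Finset.univ.filter (fun i => d i < 0), d i
            = ∑ i, (x i : ℤ) * |d i|} := by
  rw [prod_inv_one_sub_single, hS, coeff_single_mul, sub_neg_eq_add,
    LaurentSeries.coeff_prod_inv_one_sub_single _ fun i => abs_pos.2 (hd i)]
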